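/- If β is σ-extendable to α and β_s = 0 where s = σ^{-1}(1), then 𝒜_β^σ(0, x_2, ..., x_n) = 𝒜_{β_{(1)}}^{σ_1}(x_2, ..., x_n), where β_{(1)} = (β_1,...,β_{s−1},β_{s+1},...,β_n) and σ_1 is the permutation of [n−1] obtained from σ by deleting the value 1 and subtracting 1 from the remaining values. -/

import Mathlib

/-!
Let `s = σ⁻¹(1)`. As `β_s = 0`, column `s` of an SSAF is the basement entry `1` alone, so setting
`x_1 = 0` kills exactly the fillings with a `1` above the basement. In those that survive, every
entry outside column `s` is at least `2`, so deleting column `s` and lowering all other entries by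
one is a bijection onto the SSAFs of shape `β_{(1)}` with basement `σ_1`: the SSAF conditions
compare entries of the remaining columns by order only, and the inversion triples meeting column
`s`, all of type B through its basement cell, hold automatically. The weight changes by
`x_{k+1} ↦ x_k`.
-/

/-- A semi-skyline augmented filling of shape `α` with basement `σ`.
Entries are positive naturals; `σ i` as a value in `[n]` is `(σ i : ℕ) + 1`.
Conditions: positivity, basement, no descents, type A and type B inversion triples. -/
def IsSSAF (n : ℕ) (α : Fin n → ℕ) (σ : Equiv.Perm (Fin n)) (F : Fin n → ℕ → ℕ) : Prop :=
  (∀ i j, j ≤ α i → 1 ≤ F i j) ∧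
  (∀ i, F i 0 = (σ i : ℕ) + 1) ∧
  (∀ i j, j + 1 ≤ α i → F i (j + 1) ≤ F i j) ∧
  (∀ ℓ r : Fin n, ∀ i : ℕ, ℓ < r → α r ≤ α ℓ → i + 1 ≤ α r →
    ¬ (F ℓ (i + 1) ≤ F r (i + 1) ∧ F r (i + 1) ≤ F ℓ i)) ∧
  (∀ ℓ r : Fin n, ∀ i : ℕ, ℓ < r → α ℓ < α r → i ≤ α ℓ → i + 1 ≤ α r →
    ¬ (F r (i + 1) ≤ F ℓ i ∧ F ℓ i ≤ F r i))

/-- `β` is `σ`-extendable to `α` (Definition 3.3). -/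
def SigmaExtendable (n : ℕ) (σ : Equiv.Perm (Fin n)) (β α : Fin n → ℕ) : Prop :=
  (∀ i, β i ≤ α i) ∧
  ∀ ℓ r : Fin n, ℓ < r →
    (α r ≤ α ℓ → β r ≤ β ℓ → α r ≤ β ℓ) ∧
    (α ℓ < α r → β ℓ < β r → α ℓ < β r) ∧
    (α r ≤ α ℓ → β ℓ < β r → α r = β r ∧ (σ ℓ : ℕ) < (σ r : ℕ)) ∧
    (α ℓ < α r → β r ≤ β ℓ → α ℓ = β ℓ ∧ (σ r : ℕ) < (σ ℓ : ℕ))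

/-- The set of SSAFs of shape `α` with basement `σ`, with fillings normalized
to be `0` outside the cells of the diagram. -/
def SSAFSet (n : ℕ) (α : Fin n → ℕ) (σ : Equiv.Perm (Fin n)) : Set (Fin n → ℕ → ℕ) :=
  {F | IsSSAF n α σ F ∧ ∀ i j, α i < j → F i j = 0}

/-- The permuted-basement Demazure atom `𝒜_α^σ`, as a sum of monomial weights
over SSAFs of shape `α` with basement `σ`; `x j` is the variable `x_j`. -/
noncomputable def atomSum (n : ℕ) (α : Fin n → ℕ) (σ : Equiv.Perm (Fin n)) (x : ℕ → ℝ) : ℝ :=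
  ∑ᶠ F ∈ SSAFSet n α σ, ∏ i : Fin n, ∏ j ∈ Finset.Icc 1 (α i), x (F i j)

namespace SSAF

variable {n : ℕ}

def weight (α : Fin n → ℕ) (x : ℕ → ℝ) (F : Fin n → ℕ → ℕ) : ℝ :=
  ∏ i : Fin n, ∏ j ∈ Finset.Icc 1 (α i), x (F i j)

def AvoidsOne (α : Fin n → ℕ) (F : Fin n → ℕ → ℕ) : Prop :=
  ∀ i j, 1 ≤ j → j ≤ α i → F i j ≠ 1

lemma atomSum_eq_finsum_weight (α : Fin n → ℕ) (σ : Equiv.Perm (Fin n)) (x : ℕ → ℝ) :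
    atomSum n α σ x = ∑ᶠ F ∈ SSAFSet n α σ, weight α x F :=
  rfl

lemma avoidsOne_of_weight_update_one_ne_zero {α : Fin n → ℕ} {x : ℕ → ℝ}
    {F : Fin n → ℕ → ℕ} (hF : weight α (Function.update x 1 0) F ≠ 0) : AvoidsOne α F := by
  intro i j hj1 hj hFij
  refine hF (Finset.prod_eq_zero (Finset.mem_univ i) (Finset.prod_eq_zero
    (Finset.mem_Icc.mpr ⟨hj1, hj⟩) ?_))
  rw [hFij, Function.update_self]

lemma atomSum_update_one_zero (α : Fin n → ℕ) (σ : Equiv.Perm (Fin n)) (x : ℕ → ℝ) :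
    atomSum n α σ (Function.update x 1 0) =
      ∑ᶠ F ∈ {F ∈ SSAFSet n α σ | AvoidsOne α F}, weight α (Function.update x 1 0) F :=
  finsum_mem_inter_support_eq' _ _ _ fun _ hF =>
    ⟨fun h => ⟨h, avoidsOne_of_weight_update_one_ne_zero hF⟩, And.left⟩

section Columns

variable (s : Fin (n + 1))

def eraseColumn (F : Fin (n + 1) → ℕ → ℕ) : Fin n → ℕ → ℕ :=
  fun i j => F (s.succAbove i) j - 1

def insertColumn (β : Fin (n + 1) → ℕ) (G : Fin n → ℕ → ℕ) : Fin (n + 1) → ℕ → ℕ :=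
  Fin.insertNth s (fun j => if j = 0 then 1 else 0)
    fun i j => if β (s.succAbove i) < j then 0 else G i j + 1

variable {s}

lemma insertColumn_self (β : Fin (n + 1) → ℕ) (G : Fin n → ℕ → ℕ) (j : ℕ) :
    insertColumn s β G s j = if j = 0 then 1 else 0 := by
  simp [insertColumn]

lemma insertColumn_succAbove_of_le {β : Fin (n + 1) → ℕ} (G : Fin n → ℕ → ℕ) {i : Fin n}
    {j : ℕ} (hj : j ≤ β (s.succAbove i)) :
    insertColumn s β G (s.succAbove i) j = G i j + 1 := by
  simp [insertColumn, hj.not_gt]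

lemma insertColumn_succAbove_of_lt {β : Fin (n + 1) → ℕ} (G : Fin n → ℕ → ℕ) {i : Fin n}
    {j : ℕ} (hj : β (s.succAbove i) < j) : insertColumn s β G (s.succAbove i) j = 0 := by
  simp [insertColumn, hj]

variable {β : Fin (n + 1) → ℕ} {σ : Equiv.Perm (Fin (n + 1))} {σ1 : Equiv.Perm (Fin n)}

lemma two_le_of_avoidsOne (hσs : σ s = 0) {F : Fin (n + 1) → ℕ → ℕ}
    (hF : IsSSAF (n + 1) β σ F) (hF1 : AvoidsOne β F) {k : Fin (n + 1)} (hk : k ≠ s) {j : ℕ}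
    (hj : j ≤ β k) : 2 ≤ F k j := by
  obtain ⟨hpos, hbase, -⟩ := hF
  rcases Nat.eq_zero_or_pos j with rfl | hj0
  · have : (σ k : ℕ) ≠ 0 := Fin.val_ne_zero_iff.mpr (hσs ▸ σ.injective.ne hk)
    have := hbase k
    omega
  · have := hpos k j hj
    have := hF1 k j hj0 hj
    omega

lemma eraseColumn_mem (hσs : σ s = 0)
    (hσ1 : ∀ i : Fin n, (σ1 i : ℕ) + 1 = (σ (s.succAbove i) : ℕ)) {F : Fin (n + 1) → ℕ → ℕ}
    (hF : F ∈ SSAFSet (n + 1) β σ) (hF1 : AvoidsOne β F) :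
    eraseColumn s F ∈ SSAFSet n (fun i => β (s.succAbove i)) σ1 := by
  have two_le i j (hj : j ≤ β (s.succAbove i)) : 2 ≤ F (s.succAbove i) j :=
    two_le_of_avoidsOne hσs hF.1 hF1 (Fin.succAbove_ne s i) hj
  obtain ⟨⟨-, hbase, hdesc, hA, hB⟩, hzero⟩ := hF
  simp only [SSAFSet, IsSSAF, eraseColumn, Set.mem_ofPred_eq]
  refine ⟨⟨fun i j hj => ?_, fun i => ?_, fun i j hj => ?_, fun ℓ r i hlr hβ hi => ?_,
    fun ℓ r i hlr hβ hi hi' => ?_⟩, fun i j hj => by simp [hzero _ j hj]⟩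
  · have := two_le i j hj
    omega
  · have := hbase (s.succAbove i)
    have := hσ1 i
    omega
  · exact Nat.sub_le_sub_right (hdesc _ j hj) 1
  · have := two_le ℓ (i + 1) (hi.trans hβ)
    have := two_le r (i + 1) hi
    have := two_le ℓ i (by omega)
    have := hA _ _ i (Fin.succAbove_lt_succAbove_iff.mpr hlr) hβ hi
    omega
  · have := two_le r (i + 1) hi'
    have := two_le ℓ i hi
    have := two_le r i (by omega)
    have := hB _ _ i (Fin.succAbove_lt_succAbove_iff.mpr hlr) hβ hi hi'
    omega

lemma isSSAF_insertColumn (hσs : σ s = 0) (hβs : β s = 0)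
    (hσ1 : ∀ i : Fin n, (σ1 i : ℕ) + 1 = (σ (s.succAbove i) : ℕ)) {G : Fin n → ℕ → ℕ}
    (hG : IsSSAF n (fun i => β (s.succAbove i)) σ1 G) :
    IsSSAF (n + 1) β σ (insertColumn s β G) := by
  obtain ⟨hpos, hbase, hdesc, hA, hB⟩ := hG
  have ne_of_pos {k : Fin (n + 1)} (hk : 0 < β k) : k ≠ s := by rintro rfl; omega
  refine ⟨fun k j hj => ?_, fun k => ?_, fun k j hj => ?_, fun ℓ r i hlr hβ hi => ?_,
    fun ℓ r i hlr hβ hi hi' => ?_⟩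
  · rcases Fin.eq_self_or_eq_succAbove s k with rfl | ⟨k, rfl⟩
    · simp [insertColumn_self, show j = 0 by omega]
    · simp [insertColumn_succAbove_of_le G hj]
  · rcases Fin.eq_self_or_eq_succAbove s k with rfl | ⟨k, rfl⟩
    · simp [insertColumn_self, hσs]
    · rw [insertColumn_succAbove_of_le G (Nat.zero_le _), hbase k, hσ1 k]
  · obtain ⟨k, rfl⟩ := Fin.exists_succAbove_eq (ne_of_pos (by omega : 0 < β k))
    rw [insertColumn_succAbove_of_le G hj, insertColumn_succAbove_of_le G (by omega)]
    exact Nat.add_le_add_right (hdesc k j hj) 1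
  · obtain ⟨ℓ, rfl⟩ := Fin.exists_succAbove_eq (ne_of_pos (by omega : 0 < β ℓ))
    obtain ⟨r, rfl⟩ := Fin.exists_succAbove_eq (ne_of_pos (by omega : 0 < β r))
    rw [insertColumn_succAbove_of_le G (hi.trans hβ), insertColumn_succAbove_of_le G hi,
      insertColumn_succAbove_of_le G (by omega : i ≤ β _)]
    simpa using hA ℓ r i (Fin.succAbove_lt_succAbove_iff.mp hlr) hβ hi
  · obtain ⟨r, rfl⟩ := Fin.exists_succAbove_eq (ne_of_pos (by omega : 0 < β r))
    rw [insertColumn_succAbove_of_le G hi', insertColumn_succAbove_of_le G (by omega : i ≤ β _)]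
    rcases Fin.eq_self_or_eq_succAbove s ℓ with rfl | ⟨ℓ, rfl⟩
    · -- then `i = 0`, and the entry above the basement of `r` exceeds the basement `1` of column `s`
      have := hpos r 1 (le_trans (Nat.le_add_left 1 i) hi')
      simp [insertColumn_self, show i = 0 by omega]
      omega
    · rw [insertColumn_succAbove_of_le G hi]
      simpa using hB ℓ r i (Fin.succAbove_lt_succAbove_iff.mp hlr) hβ hi hi'

lemma insertColumn_mem (hσs : σ s = 0) (hβs : β s = 0)
    (hσ1 : ∀ i : Fin n, (σ1 i : ℕ) + 1 = (σ (s.succAbove i) : ℕ)) {G : Fin n → ℕ → ℕ}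
    (hG : G ∈ SSAFSet n (fun i => β (s.succAbove i)) σ1) :
    insertColumn s β G ∈ SSAFSet (n + 1) β σ ∧ AvoidsOne β (insertColumn s β G) := by
  refine ⟨⟨isSSAF_insertColumn hσs hβs hσ1 hG.1, fun k j hj => ?_⟩, fun k j hj1 hj => ?_⟩
  · rcases Fin.eq_self_or_eq_succAbove s k with rfl | ⟨k, rfl⟩
    · simp [insertColumn_self, show j ≠ 0 by omega]
    · exact insertColumn_succAbove_of_lt G hj
  · obtain ⟨k, rfl⟩ := Fin.exists_succAbove_eq (show k ≠ s by rintro rfl; omega)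
    have := hG.1.1 k j hj
    rw [insertColumn_succAbove_of_le G hj]
    omega

lemma insertColumn_eraseColumn (hσs : σ s = 0) (hβs : β s = 0) {F : Fin (n + 1) → ℕ → ℕ}
    (hF : F ∈ SSAFSet (n + 1) β σ) : insertColumn s β (eraseColumn s F) = F := by
  obtain ⟨⟨hpos, hbase, -⟩, hzero⟩ := hF
  funext k j
  rcases Fin.eq_self_or_eq_succAbove s k with rfl | ⟨k, rfl⟩
  · rcases Nat.eq_zero_or_pos j with rfl | hj
    · simp [insertColumn_self, hbase, hσs]
    · simp [insertColumn_self, hzero k j (by omega), hj.ne']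
  · rcases lt_or_ge (β (s.succAbove k)) j with hj | hj
    · rw [insertColumn_succAbove_of_lt _ hj, hzero _ j hj]
    · have := hpos _ j hj
      rw [insertColumn_succAbove_of_le _ hj, eraseColumn]
      omega

lemma eraseColumn_insertColumn {G : Fin n → ℕ → ℕ}
    (hG : ∀ i j, β (s.succAbove i) < j → G i j = 0) :
    eraseColumn s (insertColumn s β G) = G := by
  funext i j
  rcases lt_or_ge (β (s.succAbove i)) j with hj | hj
  · rw [eraseColumn, insertColumn_succAbove_of_lt G hj, hG i j hj]
  · rw [eraseColumn, insertColumn_succAbove_of_le G hj, Nat.add_sub_cancel]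

lemma bijOn_eraseColumn (hσs : σ s = 0) (hβs : β s = 0)
    (hσ1 : ∀ i : Fin n, (σ1 i : ℕ) + 1 = (σ (s.succAbove i) : ℕ)) :
    Set.BijOn (eraseColumn s) {F ∈ SSAFSet (n + 1) β σ | AvoidsOne β F}
      (SSAFSet n (fun i => β (s.succAbove i)) σ1) :=
  Set.InvOn.bijOn (f' := insertColumn s β)
    ⟨fun _ hF => insertColumn_eraseColumn hσs hβs hF.1, fun _ hG => eraseColumn_insertColumn hG.2⟩
    (fun _ hF => eraseColumn_mem hσs hσ1 hF.1 hF.2) (fun _ hG => insertColumn_mem hσs hβs hσ1 hG)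

lemma weight_eraseColumn (hβs : β s = 0) (x : ℕ → ℝ) {F : Fin (n + 1) → ℕ → ℕ}
    (hF : IsSSAF (n + 1) β σ F) (hF1 : AvoidsOne β F) :
    weight β (Function.update x 1 0) F =
      weight (fun i => β (s.succAbove i)) (fun j => x (j + 1)) (eraseColumn s F) := by
  rw [weight, Fin.prod_univ_succAbove _ s, hβs, Finset.Icc_eq_empty (by omega),
    Finset.prod_empty, one_mul]
  refine Finset.prod_congr rfl fun i _ => Finset.prod_congr rfl fun j hj => ?_
  obtain ⟨hj1, hj⟩ := Finset.mem_Icc.mp hj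
  have := hF.1 _ j hj
  rw [Function.update_of_ne (hF1 _ j hj1 hj)]
  simp only [eraseColumn, Nat.sub_add_cancel this]

end Columns

end SSAF

open SSAF in
theorem stmt12_general (n : ℕ) (σ : Equiv.Perm (Fin (n + 1))) (β : Fin (n + 1) → ℕ)
    (hs : β (σ⁻¹ 0) = 0)
    (σ1 : Equiv.Perm (Fin n))
    (hσ1 : ∀ i : Fin n, (σ1 i : ℕ) + 1 = ((σ ((σ⁻¹ 0).succAbove i)) : ℕ))
    (x : ℕ → ℝ) :
    atomSum (n + 1) β σ (Function.update x 1 0) =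
      atomSum n (fun i => β ((σ⁻¹ 0).succAbove i)) σ1 (fun j => x (j + 1)) := by
  have hσs : σ (σ⁻¹ 0) = 0 := σ.apply_symm_apply 0
  rw [atomSum_update_one_zero, atomSum_eq_finsum_weight]
  exact finsum_mem_eq_of_bijOn _ (bijOn_eraseColumn hσs hs hσ1) fun F hF =>
    weight_eraseColumn hs x hF.1.1 hF.2

theorem stmt12 (n : ℕ) (σ : Equiv.Perm (Fin (n + 1))) (α β : Fin (n + 1) → ℕ)
    (hext : SigmaExtendable (n + 1) σ β α) (hs : β (σ⁻¹ 0) = 0)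
    (σ1 : Equiv.Perm (Fin n))
    (hσ1 : ∀ i : Fin n, (σ1 i : ℕ) + 1 = ((σ ((σ⁻¹ 0).succAbove i)) : ℕ))
    (x : ℕ → ℝ) :
    atomSum (n + 1) β σ (Function.update x 1 0) =
      atomSum n (fun i => β ((σ⁻¹ 0).succAbove i)) σ1 (fun j => x (j + 1)) :=
  stmt12_general n σ β hs σ1 hσ1 x
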